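/- arXiv:quant-ph/9908070 — 2 statements merged into one kernel-verified Lean document; each statement's English description precedes it below -/
import Mathlib

section
/- With v_i as above (the Pyramid vectors), any three distinct vectors v_i, v_j, v_k (i, j, k pairwise distinct in {0,...,4}) are linearly independent, i.e., span ℝ³. -/
/-!
The vectors are `N (cos θ, sin θ, h)` with `N, h > 0`. For such rows the determinant is
`N³ h (sin (b - a) + sin (c - b) - sin (c - a))`, which factors as
`4 N³ h sin ((b - a)/2) sin ((c - b)/2) sin ((c - a)/2)`. For the angles `2πi/5` the
half-differences `π (j - i)/5` are nonzero and lie strictly between `-π` and `π`, so none of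
the sines vanishes.
-/

noncomputable def pyrH : ℝ := (1/2) * Real.sqrt (1 + Real.sqrt 5)

noncomputable def pyrN : ℝ := 2 / Real.sqrt (5 + Real.sqrt 5)

/-- The Pyramid vectors in ℝ³. -/
noncomputable def pyrV (i : Fin 5) : EuclideanSpace ℝ (Fin 3) :=
  WithLp.toLp 2 ![pyrN * Real.cos (2 * Real.pi * (i : ℕ) / 5),
    pyrN * Real.sin (2 * Real.pi * (i : ℕ) / 5),
    pyrN * pyrH]

open Real

theorem EuclideanSpace.linearIndependent_of_det_ne_zero {K ι : Type*} [Field K] [Fintype ι]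
    [DecidableEq ι] {v : ι → EuclideanSpace K ι}
    (h : (Matrix.of fun l => (v l).ofLp).det ≠ 0) :
    LinearIndependent K v :=
  .of_comp (WithLp.linearEquiv 2 K (ι → K)).toLinearMap
    (Matrix.linearIndependent_rows_of_det_ne_zero h)

theorem sin_two_mul_add_sin_two_mul_sub_sin_two_mul_add (p q : ℝ) :
    sin (2 * p) + sin (2 * q) - sin (2 * (p + q)) = 4 * sin p * sin q * sin (p + q) := by
  rw [sin_two_mul, sin_two_mul, sin_two_mul, sin_add, cos_add]
  linear_combination (-(2 * sin p * cos p)) * sin_sq_add_cos_sq q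
    + (-(2 * sin q * cos q)) * sin_sq_add_cos_sq p

theorem det_of_cos_sin_rows (N h a b c : ℝ) :
    (Matrix.of ![![N * cos a, N * sin a, N * h], ![N * cos b, N * sin b, N * h],
      ![N * cos c, N * sin c, N * h]]).det
      = 4 * N ^ 3 * h * sin ((b - a) / 2) * sin ((c - b) / 2) * sin ((c - a) / 2) := by
  have key := sin_two_mul_add_sin_two_mul_sub_sin_two_mul_add ((b - a) / 2) ((c - b) / 2)
  rw [show 2 * ((b - a) / 2) = b - a by ring, show 2 * ((c - b) / 2) = c - b by ring,
    show 2 * ((b - a) / 2 + (c - b) / 2) = c - a by ring,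
    show (b - a) / 2 + (c - b) / 2 = (c - a) / 2 by ring, sin_sub, sin_sub, sin_sub] at key
  rw [Matrix.det_fin_three]
  simp only [Matrix.of_apply, Matrix.cons_val_zero, Matrix.cons_val_one, Matrix.cons_val_two,
    Matrix.head_cons, Matrix.tail_cons]
  linear_combination N ^ 3 * h * key

theorem sin_pi_mul_sub_div_ne_zero {n : ℕ} {i j : Fin n} (hij : i ≠ j) :
    sin (π * ((j : ℕ) - (i : ℕ)) / n) ≠ 0 := by
  have hn : (0 : ℝ) < n := by exact_mod_cast i.pos
  have hi : ((i : ℕ) : ℝ) < n := by exact_mod_cast i.isLt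
  have hj : ((j : ℕ) : ℝ) < n := by exact_mod_cast j.isLt
  have hne : ((j : ℕ) : ℝ) - (i : ℕ) ≠ 0 :=
    sub_ne_zero.2 (by exact_mod_cast Fin.val_ne_of_ne hij.symm)
  have hi0 : (0 : ℝ) ≤ (i : ℕ) := Nat.cast_nonneg _
  have hj0 : (0 : ℝ) ≤ (j : ℕ) := Nat.cast_nonneg _
  have hlt : (((j : ℕ) : ℝ) - (i : ℕ)) / n < 1 := (div_lt_one hn).2 (by linarith)
  have hgt : -1 < (((j : ℕ) : ℝ) - (i : ℕ)) / n := by rw [lt_div_iff₀ hn]; linarith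
  rw [mul_div_assoc, Ne,
    sin_eq_zero_iff_of_lt_of_lt (by nlinarith [pi_pos]) (by nlinarith [pi_pos])]
  exact mul_ne_zero pi_ne_zero (div_ne_zero hne hn.ne')

theorem pyrN_pos : 0 < pyrN := by unfold pyrN; positivity

theorem pyrH_pos : 0 < pyrH := by unfold pyrH; positivity

theorem det_pyrV (i j k : Fin 5) :
    (Matrix.of fun l => (![pyrV i, pyrV j, pyrV k] l).ofLp).det
      = 4 * pyrN ^ 3 * pyrH * sin (π * ((j : ℕ) - (i : ℕ)) / 5)
        * sin (π * ((k : ℕ) - (j : ℕ)) / 5) * sin (π * ((k : ℕ) - (i : ℕ)) / 5) := by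
  have half (x y : ℝ) : π * (y - x) / 5 = (2 * π * y / 5 - 2 * π * x / 5) / 2 := by ring
  rw [half, half, half, ← det_of_cos_sin_rows]
  congr
  ext l m
  fin_cases l <;> fin_cases m <;> rfl

/-- Any three distinct Pyramid vectors are linearly independent (hence span ℝ³). -/
theorem stmt1 (i j k : Fin 5) (hij : i ≠ j) (hik : i ≠ k) (hjk : j ≠ k) :
    LinearIndependent ℝ ![pyrV i, pyrV j, pyrV k] := by
  apply EuclideanSpace.linearIndependent_of_det_ne_zero
  rw [det_pyrV]
  have hNh : 4 * pyrN ^ 3 * pyrH ≠ 0 := by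
    have := pyrN_pos
    have := pyrH_pos
    positivity
  exact mul_ne_zero (mul_ne_zero (mul_ne_zero hNh (sin_pi_mul_sub_div_ne_zero hij))
    (sin_pi_mul_sub_div_ne_zero hjk)) (sin_pi_mul_sub_div_ne_zero hik)
end

section
/- The five product states ψ_i = v_i ⊗ v_{2i mod 5} (i = 0,...,4) in ℝ³ ⊗ ℝ³ are pairwise orthogonal. -/
/-! With θᵢ = 2πi/5, `⟪vᵢ, vⱼ⟫ = N² (cos (θⱼ - θᵢ) + h²)` and `h² = (1 + √5)/4 = cos (π/5)`, so
`vᵢ ⊥ vⱼ` exactly when `j - i ≡ ±2 (mod 5)`. For `i ≠ j` either `j - i ≡ ±2`, or `j - i ≡ ±1` and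
then `2j - 2i ≡ ±2`: one of the two factors vanishes. -/

open Real

lemma cos_two_pi_mul_fin_sub_div {n : ℕ} (i j : Fin n) :
    cos (2 * π * (((j : ℕ) : ℝ) - (i : ℕ)) / n) = cos (2 * π * ((j - i : Fin n) : ℕ) / n) := by
  have hn : (n : ℝ) ≠ 0 := by have := i.pos; positivity
  rcases le_or_gt i j with hij | hij
  · rw [Fin.coe_sub_iff_le.mpr hij, Nat.cast_sub hij]
  · rw [Fin.coe_sub_iff_lt.mpr hij, Nat.cast_sub (by omega), Nat.cast_add, ← cos_add_two_pi]
    congr 1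
    field_simp
    ring

lemma pyrH_sq : pyrH ^ 2 = cos (π / 5) := by
  rw [pyrH, mul_pow, sq_sqrt (by positivity), cos_pi_div_five]
  ring

lemma inner_pyrV (i j : Fin 5) :
    inner ℝ (pyrV i) (pyrV j) = pyrN ^ 2 * (cos (2 * π * ((j - i : Fin 5) : ℕ) / 5) + cos (π / 5)) := by
  have hred := cos_two_pi_mul_fin_sub_div i j
  rw [Nat.cast_ofNat] at hred
  rw [← hred, ← pyrH_sq, mul_sub, sub_div, cos_sub]
  simp only [pyrV, PiLp.inner_apply, RCLike.inner_apply, ringHom_apply, Fin.sum_univ_three,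
    Matrix.cons_val_zero, Matrix.cons_val_one, Matrix.cons_val]
  ring

lemma inner_pyrV_eq_zero {i j : Fin 5} (h : j - i = 2 ∨ j - i = 3) :
    inner ℝ (pyrV i) (pyrV j) = 0 := by
  have hcos2 : cos (2 * π * 2 / 5) = -cos (π / 5) := by
    rw [← cos_pi_sub]; congr 1; ring
  have hcos3 : cos (2 * π * 3 / 5) = -cos (π / 5) := by
    rw [← cos_add_pi]; congr 1; ring
  rcases h with h | h <;> simp [inner_pyrV, h, hcos2, hcos3]

/-- The five product states ψ_i = v_i ⊗ v_{2i mod 5} are pairwise orthogonal: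
since ⟨a⊗b, c⊗d⟩ = ⟨a,c⟩⟨b,d⟩, orthogonality of ψ_i and ψ_j is the vanishing of
⟨v_i,v_j⟩·⟨v_{2i mod 5}, v_{2j mod 5}⟩.  (Multiplication in `Fin 5` is mod 5.) -/
theorem stmt2 (i j : Fin 5) (hij : i ≠ j) :
    (inner ℝ (pyrV i) (pyrV j) : ℝ) * (inner ℝ (pyrV (2 * i)) (pyrV (2 * j)) : ℝ) = 0 := by
  have hcases : ∀ d : Fin 5, d ≠ 0 → (d = 2 ∨ d = 3) ∨ (2 * d = 2 ∨ 2 * d = 3) := by decide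
  rcases hcases (j - i) (sub_ne_zero.mpr hij.symm) with hd | hd
  · rw [inner_pyrV_eq_zero hd, zero_mul]
  · rw [mul_sub] at hd
    rw [inner_pyrV_eq_zero hd, mul_zero]
end
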